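/- arXiv:math/0205101 — 2 statements merged into one kernel-verified Lean document; each statement's English description precedes it below -/
import Mathlib

section
/- For all x, y in Z^d and β such that the two-point function is finite, g_β(x+y)·B ≥ g_β(x)·g_β(y) where B = Σ_z g_β(z)^2 is the bubble diagram; equivalently, g_β(x+y)/B ≥ (g_β(x)/B)(g_β(y)/B), provided B < ∞. -/
open scoped ENNReal

/-- An `N`-step self-avoiding walk on `ℤ^d` from `0` to `x`. -/
def IsSAWPath (d N : ℕ) (x : Fin d → ℤ) (ω : Fin (N + 1) → Fin d → ℤ) : Prop :=
  ω 0 = 0 ∧ ω (Fin.last N) = x ∧ Function.Injective ω ∧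
    ∀ j : Fin N, (∑ i, |ω j.succ i - ω j.castSucc i|) = 1

/-- `c_N(0,x)`: the number of `N`-step self-avoiding walks from `0` to `x`. -/
noncomputable def sawCountTo (d N : ℕ) (x : Fin d → ℤ) : ℕ :=
  Nat.card {ω : Fin (N + 1) → Fin d → ℤ // IsSAWPath d N x ω}

/-- The two-point function `g_β(x) = Σ_N c_N(0,x) e^{-βN}`. -/
noncomputable def twoPoint (d : ℕ) (β : ℝ) (x : Fin d → ℤ) : ℝ≥0∞ :=
  ∑' N : ℕ, (sawCountTo d N x : ℝ≥0∞) * ENNReal.ofReal (Real.exp (-β * N))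

/-- The bubble diagram `B_d(β) = Σ_x g_β(x)^2`. -/
noncomputable def bubble (d : ℕ) (β : ℝ) : ℝ≥0∞ :=
  ∑' x : Fin d → ℤ, twoPoint d β x ^ 2

/-- The critical inverse temperature `β_c(d)`: the infimum of the `β` for which
the susceptibility `Σ_x g_β(x)` is finite. -/
noncomputable def betaCrit (d : ℕ) : ℝ :=
  sInf {β : ℝ | ∑' x : Fin d → ℤ, twoPoint d β x ≠ ⊤}

namespace SAW
variable {d : ℕ}

def adj (u v : Fin d → ℤ) : Prop := (∑ i, |v i - u i|) = 1

def SAWL (a b : Fin d → ℤ) (l : List (Fin d → ℤ)) : Prop :=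
  l.head? = some a ∧ l.getLast? = some b ∧ l.Nodup ∧ l.Chain' adj

theorem SAWL.ne_nil {a b : Fin d → ℤ} {l : List (Fin d → ℤ)} (h : SAWL a b l) : l ≠ [] := by
  intro hl; rw [hl] at h; simp [SAWL] at h

theorem SAWL.one_le_length {a b : Fin d → ℤ} {l : List (Fin d → ℤ)} (h : SAWL a b l) :
    1 ≤ l.length := List.length_pos_iff.2 h.ne_nil

/-- The `Fin`-indexed walks correspond to lists. -/
noncomputable def finListEquiv (N : ℕ) (x : Fin d → ℤ) :
    {ω : Fin (N + 1) → Fin d → ℤ // IsSAWPath d N x ω} ≃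
      {l : List (Fin d → ℤ) // SAWL 0 x l ∧ l.length = N + 1} where
  toFun ω := ⟨List.ofFn ω.1, by
    obtain ⟨h0, hx, hinj, hstep⟩ := ω.2
    have hne : List.ofFn ω.1 ≠ [] := by simp [List.ofFn_eq_nil_iff]
    refine ⟨⟨?_, ?_, ?_, ?_⟩, by simp⟩
    · rw [List.head?_eq_head hne, List.head_ofFn]
      exact congrArg some h0
    · rw [List.getLast?_eq_getLast hne, List.getLast_ofFn]
      simpa [Fin.last] using hx
    · exact List.nodup_ofFn.2 hinj
    · rw [List.Chain', List.isChain_ofFn]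
      intro i hi
      have := hstep ⟨i, by omega⟩
      simpa [adj, Fin.succ, Fin.castSucc, Fin.castAdd, Fin.castLE] using this⟩
  invFun l := ⟨fun k => l.1.get (k.cast l.2.2.symm), by
    obtain ⟨⟨h0, hx, hnd, hch⟩, hlen⟩ := l.2
    have hne : l.1 ≠ [] := by intro h; simp [h] at hlen
    refine ⟨?_, ?_, ?_, ?_⟩
    · have := List.head?_eq_head hne ▸ h0
      have h2 : l.1.head hne = 0 := Option.some_injective _ this
      rw [List.head_eq_getElem] at h2
      simpa [List.get_eq_getElem] using h2
    · have h1 := List.getLast?_eq_getLast hne ▸ hx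
      have h2 := Option.some_injective _ h1
      rw [List.getLast_eq_getElem] at h2
      simp only [List.get_eq_getElem, Fin.coe_cast, Fin.val_last]
      convert h2 using 2
      omega
    · intro i j hij
      have := List.Nodup.get_inj_iff hnd (i := i.cast l.2.2.symm) (j := j.cast l.2.2.symm)
      have h2 := this.1 hij
      exact Fin.ext (by simpa using congrArg Fin.val h2)
    · intro j
      have := List.isChain_iff_getElem.1 hch j.val (by have := j.isLt; omega)
      simpa [adj, Fin.succ, Fin.castSucc, Fin.castAdd, Fin.castLE, List.get_eq_getElem] using this⟩
  left_inv ω := by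
    ext k
    simp [List.get_ofFn]
  right_inv l := by
    apply Subtype.ext
    apply List.ext_get (by simp [l.2.2])
    intro n h1 h2
    simp only [List.get_eq_getElem, List.getElem_ofFn]
    rfl

end SAW
namespace SAW
variable {d : ℕ}

theorem step_mem_Icc {N : ℕ} {x : Fin d → ℤ} {ω : Fin (N + 1) → Fin d → ℤ}
    (h : IsSAWPath d N x ω) (j : Fin N) (i : Fin d) :
    ω j.succ i - ω j.castSucc i ∈ Set.Icc (-1 : ℤ) 1 := by
  have h1 := h.2.2.2 j
  have h2 : |ω j.succ i - ω j.castSucc i| ≤ 1 := by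
    calc |ω j.succ i - ω j.castSucc i| ≤ ∑ i', |ω j.succ i' - ω j.castSucc i'| :=
      Finset.single_le_sum (f := fun i' => |ω j.succ i' - ω j.castSucc i'|) (fun _ _ => abs_nonneg _) (Finset.mem_univ i)
    _ = 1 := h1
  have := abs_le.1 h2
  exact ⟨this.1, this.2⟩

instance sawFinite (N : ℕ) (x : Fin d → ℤ) :
    Finite {ω : Fin (N + 1) → Fin d → ℤ // IsSAWPath d N x ω} := by
  classical
  set S : Set (Fin d → ℤ) := Set.pi Set.univ (fun _ => Set.Icc (-1 : ℤ) 1) with hSdef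
  have hS : S.Finite := Set.Finite.pi (fun _ => Set.finite_Icc _ _)
  have : Finite ↥S := hS.to_subtype
  have hinj : Function.Injective
      (fun (ω : {ω : Fin (N + 1) → Fin d → ℤ // IsSAWPath d N x ω}) (j : Fin N) =>
        (⟨fun i => ω.1 j.succ i - ω.1 j.castSucc i, by
          intro i _; exact step_mem_Icc ω.2 j i⟩ : ↥S)) := by
    intro ω ω' h
    have hstep : ∀ j : Fin N, ∀ i, ω.1 j.succ i - ω.1 j.castSucc i
        = ω'.1 j.succ i - ω'.1 j.castSucc i := by
      intro j i
      have := congrFun h j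
      exact congrFun (congrArg Subtype.val this) i
    apply Subtype.ext
    funext k
    induction k using Fin.induction with
    | zero => rw [ω.2.1, ω'.2.1]
    | succ j ih =>
      funext i
      have h1 := hstep j i
      have h2 := congrFun ih i
      omega
  exact Finite.of_injective _ hinj

/-- weight of a list walk -/
noncomputable def wt (β : ℝ) (l : List (Fin d → ℤ)) : ℝ≥0∞ :=
  ENNReal.ofReal (Real.exp (-β * ((l.length - 1 : ℕ) : ℝ)))

instance fibFinite (N : ℕ) (x : Fin d → ℤ) :
    Finite {l : List (Fin d → ℤ) // SAWL 0 x l ∧ l.length = N + 1} :=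
  Finite.of_equiv _ (finListEquiv N x)

noncomputable def lenSigmaEquiv (x : Fin d → ℤ) :
    (Σ N : ℕ, {l : List (Fin d → ℤ) // SAWL 0 x l ∧ l.length = N + 1}) ≃
      {l : List (Fin d → ℤ) // SAWL 0 x l} where
  toFun p := ⟨p.2.1, p.2.2.1⟩
  invFun l := ⟨l.1.length - 1, l.1, l.2, by have := l.2.one_le_length; omega⟩
  left_inv p := by
    obtain ⟨N, l, hl, hlen⟩ := p
    have hN : l.length - 1 = N := by omega
    subst hN
    rfl
  right_inv l := rfl

theorem twoPoint_eq_tsum (β : ℝ) (x : Fin d → ℤ) :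
    twoPoint d β x = ∑' l : {l : List (Fin d → ℤ) // SAWL 0 x l}, wt β l.1 := by
  rw [← Equiv.tsum_eq (lenSigmaEquiv x) (fun l => wt β l.1)]
  rw [ENNReal.tsum_sigma']
  unfold twoPoint
  congr 1
  funext N
  have : ∀ l : {l : List (Fin d → ℤ) // SAWL 0 x l ∧ l.length = N + 1},
      wt β ((lenSigmaEquiv x) ⟨N, l⟩).1 = ENNReal.ofReal (Real.exp (-β * N)) := by
    intro l
    simp only [lenSigmaEquiv, Equiv.coe_fn_mk, wt, l.2.2]
    norm_num
  rw [tsum_congr this]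
  have := Fintype.ofFinite {l : List (Fin d → ℤ) // SAWL 0 x l ∧ l.length = N + 1}
  rw [tsum_fintype]
  rw [Finset.sum_const, Finset.card_univ, nsmul_eq_mul]
  congr 1
  rw [sawCountTo]
  rw [Nat.card_congr (finListEquiv N x)]
  simp [Nat.card_eq_fintype_card]

end SAW
namespace SAW
variable {d : ℕ}

theorem adj_symm {u v : Fin d → ℤ} (h : adj u v) : adj v u := by
  unfold adj at *
  rw [← h]
  exact Finset.sum_congr rfl (fun i _ => abs_sub_comm _ _)

theorem SAWL.reverse {u v : Fin d → ℤ} {l : List (Fin d → ℤ)} (h : SAWL u v l) :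
    SAWL v u l.reverse := by
  obtain ⟨h1, h2, h3, h4⟩ := h
  refine ⟨?_, ?_, ?_, ?_⟩
  · rw [List.head?_reverse]; exact h2
  · rw [List.getLast?_reverse]; exact h1
  · exact List.nodup_reverse.2 h3
  · rw [List.Chain', List.isChain_reverse]
    exact h4.imp (fun a b hab => adj_symm hab)

theorem SAWL.map_add (c : Fin d → ℤ) {u v : Fin d → ℤ} {l : List (Fin d → ℤ)}
    (h : SAWL u v l) : SAWL (c + u) (c + v) (l.map (fun q => c + q)) := by
  obtain ⟨h1, h2, h3, h4⟩ := h
  refine ⟨?_, ?_, ?_, ?_⟩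
  · rw [List.head?_map, h1]; rfl
  · rw [List.getLast?_map, h2]; rfl
  · exact h3.map (fun a b hab => by simpa using hab)
  · rw [List.Chain', List.isChain_map]
    refine h4.imp (fun a b hab => ?_)
    unfold adj at *
    rw [← hab]
    exact Finset.sum_congr rfl (fun i _ => by simp [add_sub_add_left_eq_sub])

theorem headI_head? {α : Type*} [Inhabited α] {l : List α} (h : l ≠ []) :
    l.head? = some l.headI := by
  cases l with
  | nil => exact absurd rfl h
  | cons a t => rfl

section Splice
variable (l1 l2 : List (Fin d → ℤ))

/-- prefix of `l1` avoiding `l2` -/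
def spT : List (Fin d → ℤ) := l1.takeWhile (fun q => decide (q ∉ l2))
/-- remaining suffix of `l1` -/
def spR : List (Fin d → ℤ) := l1.dropWhile (fun q => decide (q ∉ l2))
/-- first point of `l1` on `l2` -/
def spA : Fin d → ℤ := (spR l1 l2).headI
/-- index of that point in `l2` -/
def spJ : ℕ := l2.idxOf (spA l1 l2)
/-- the spliced walk -/
def spPi : List (Fin d → ℤ) := spT l1 l2 ++ l2.drop (spJ l1 l2)
/-- the removed initial part of `l2` -/
def spE2 : List (Fin d → ℤ) := l2.take (spJ l1 l2 + 1)

theorem splice_spec {u v w : Fin d → ℤ} (h1 : SAWL u v l1) (h2 : SAWL v w l2) :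
    SAWL u w (spPi l1 l2) ∧ SAWL (spA l1 l2) v (spR l1 l2) ∧
    SAWL v (spA l1 l2) (spE2 l1 l2) ∧
    (spPi l1 l2).length + (spR l1 l2).length + (spE2 l1 l2).length
      = l1.length + l2.length + 1 ∧
    (spPi l1 l2).idxOf (spA l1 l2) = (spT l1 l2).length ∧
    l1 = spT l1 l2 ++ spR l1 l2 ∧
    l2 = spE2 l1 l2 ++ (l2.drop (spJ l1 l2)).tail ∧
    (spPi l1 l2).take (spT l1 l2).length = spT l1 l2 ∧
    (spPi l1 l2).drop (spT l1 l2).length = l2.drop (spJ l1 l2) := by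
  obtain ⟨hh1, hl1, hn1, hc1⟩ := h1
  obtain ⟨hh2, hl2, hn2, hc2⟩ := h2
  have hl1ne : l1 ≠ [] := by intro h; rw [h] at hh1; simp at hh1
  have hl2ne : l2 ≠ [] := by intro h; rw [h] at hh2; simp at hh2
  have hvl1 : v ∈ l1 := by
    have := List.getLast?_eq_getLast hl1ne ▸ hl1
    have h2 := Option.some_injective _ this
    rw [← h2]; exact List.getLast_mem hl1ne
  have hvl2 : v ∈ l2 := List.mem_of_mem_head? (by rw [hh2]; rfl)
  set p : (Fin d → ℤ) → Bool := fun q => decide (q ∉ l2) with hp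
  set t := spT l1 l2 with hT
  set r := spR l1 l2 with hR
  have htr : t ++ r = l1 := List.takeWhile_append_dropWhile (p := p)
  have hrne : r ≠ [] := by
    intro h
    have := List.dropWhile_eq_nil_iff.1 h v hvl1
    simp [hp] at this
    exact this hvl2
  set a := spA l1 l2 with hA
  have hrhead : r.head? = some a := headI_head? hrne
  have hal2 : a ∈ l2 := by
    have hh := List.head_dropWhile_not p hrne
    have ha : (List.dropWhile p l1).head hrne = a := by
      have h5 : (List.dropWhile p l1).head? = some a := headI_head? hrne
      rw [List.head?_eq_head (l := List.dropWhile p l1) hrne] at h5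
      exact Option.some_injective _ h5
    rw [ha] at hh
    simpa [hp] using hh
  have htmem : ∀ q ∈ t, q ∉ l2 := by
    intro q hq
    have := List.mem_takeWhile_imp hq
    simpa [hp] using this
  have hJ : spJ l1 l2 = l2.idxOf a := rfl
  have hj : l2.idxOf a < l2.length := List.idxOf_lt_length_iff.2 hal2
  set s := l2.drop (l2.idxOf a) with hS
  have hsne : s ≠ [] := by
    rw [hS, ← List.length_pos_iff, List.length_drop]
    omega
  have hshead : s.head? = some a := by
    rw [hS, List.head?_drop, List.getElem?_eq_getElem hj, List.getElem_idxOf hj]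
  have hanott : a ∉ t := fun h => htmem a h hal2
  -- Nodups
  have hnt : t.Nodup := List.Nodup.sublist (List.takeWhile_sublist p) hn1
  have hnr : r.Nodup := List.Nodup.sublist (List.dropWhile_sublist p) hn1
  have hns : s.Nodup := List.Nodup.sublist (List.drop_sublist _ l2) hn2
  -- Chains
  have hct : t.Chain' adj := hc1.prefix (List.takeWhile_prefix p)
  have hcr : r.Chain' adj := hc1.suffix ⟨t, htr⟩
  have hcs : s.Chain' adj := hc2.drop _
  have hce2 : (spE2 l1 l2).Chain' adj := hc2.take _
  -- the link between t and s
  have hlink : ∀ q ∈ t.getLast?, ∀ q' ∈ s.head?, adj q q' := by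
    intro q hq q' hq'
    rw [hshead] at hq'
    simp only [Option.mem_def, Option.some.injEq] at hq'
    subst hq'
    rw [← htr] at hc1
    have := (List.isChain_append.1 hc1).2.2 q hq a (by rw [hrhead]; rfl)
    exact this
  have hπ : SAWL u w (spPi l1 l2) := by
    refine ⟨?_, ?_, ?_, ?_⟩
    · show (t ++ s).head? = some u
      cases ht : t with
      | nil =>
        rw [ht] at htr
        simp only [List.nil_append] at htr ⊢
        rw [hshead, ← hh1, ← htr, hrhead]
      | cons b tl =>
        rw [List.head?_append_of_ne_nil _ (by simp [ht])]
        rw [← hh1, ← htr, List.head?_append_of_ne_nil _ (by simp [ht]), ht]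
    · show (t ++ s).getLast? = some w
      rw [List.getLast?_append_of_ne_nil t hsne, hS]
      rw [← hl2]
      conv_rhs => rw [← List.take_append_drop (l2.idxOf a) l2]
      rw [List.getLast?_append_of_ne_nil _ hsne]
    · exact List.Nodup.append hnt hns
        (fun q hq hq' => htmem q hq (List.drop_subset _ l2 hq'))
    · exact List.isChain_append.2 ⟨hct, hcs, hlink⟩
  have hr' : SAWL a v r := by
    refine ⟨hrhead, ?_, hnr, hcr⟩
    rw [← hl1, ← htr, List.getLast?_append_of_ne_nil t hrne]
  have he2 : SAWL v a (spE2 l1 l2) := by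
    have hlen2 : (spE2 l1 l2).length = l2.idxOf a + 1 := by
      show (l2.take (l2.idxOf a + 1)).length = l2.idxOf a + 1
      rw [List.length_take]
      omega
    refine ⟨?_, ?_, List.Nodup.sublist (List.take_sublist _ _) hn2, hce2⟩
    · show (l2.take (l2.idxOf a + 1)).head? = some v
      rw [List.head?_take]
      simp [hh2]
    · rw [List.getLast?_eq_getElem?, hlen2]
      simp only [Nat.add_sub_cancel]
      have hje : l2.idxOf a < (spE2 l1 l2).length := by omega
      rw [List.getElem?_eq_getElem hje]
      show some (l2.take (l2.idxOf a + 1))[l2.idxOf a] = some a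
      have hh : (l2.take (l2.idxOf a + 1))[l2.idxOf a]'(by rw [List.length_take]; omega) = a := by
        rw [List.getElem_take]; exact List.getElem_idxOf hj
      exact congrArg some hh
  have hidx : (spPi l1 l2).idxOf a = t.length := by
    show (t ++ s).idxOf a = t.length
    rw [List.idxOf_append_of_notMem hanott]
    obtain ⟨b, tl, hbs⟩ : ∃ b tl, s = b :: tl := List.exists_cons_of_ne_nil hsne
    have hb : b = a := by
      rw [hbs] at hshead
      simpa using hshead
    rw [hbs, hb, List.idxOf_cons_self]
    omega
  have hlen : (spPi l1 l2).length + r.length + (spE2 l1 l2).length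
      = l1.length + l2.length + 1 := by
    have h1 : (spPi l1 l2).length = t.length + s.length := by
      show (t ++ s).length = _
      rw [List.length_append]
    have h2 : t.length + r.length = l1.length := by
      rw [← List.length_append, htr]
    have h3 : s.length = l2.length - l2.idxOf a := by rw [hS, List.length_drop]
    have h4 : (spE2 l1 l2).length = l2.idxOf a + 1 := by
      show (l2.take (l2.idxOf a + 1)).length = l2.idxOf a + 1
      rw [List.length_take]; omega
    omega
  refine ⟨hπ, hr', he2, hlen, hidx, htr.symm, ?_, ?_, ?_⟩
  · show l2 = spE2 l1 l2 ++ (l2.drop (l2.idxOf a)).tail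
    rw [List.tail_drop]
    conv_lhs => rw [← List.take_append_drop (l2.idxOf a + 1) l2]
    rfl
  · show (t ++ s).take t.length = t
    exact List.take_left
  · show (t ++ s).drop t.length = s
    exact List.drop_left

end Splice
end SAW
namespace SAW
variable {d : ℕ}

abbrev LW (d : ℕ) (x : Fin d → ℤ) := {l : List (Fin d → ℤ) // SAWL 0 x l}

theorem shiftSAW (x : Fin d → ℤ) {y : Fin d → ℤ} {l : List (Fin d → ℤ)}
    (h : SAWL 0 y l) : SAWL x (x + y) (l.map (fun q => x + q)) := by
  have := h.map_add x
  simpa using this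

theorem revSAW {a x : Fin d → ℤ} {l : List (Fin d → ℤ)} (h : SAWL a x l) :
    SAWL 0 (-x + a) (l.reverse.map (fun q => -x + q)) := by
  have := (h.reverse).map_add (-x)
  simpa using this

theorem shiftSAW2 {x a : Fin d → ℤ} {l : List (Fin d → ℤ)} (h : SAWL x a l) :
    SAWL 0 (-x + a) (l.map (fun q => -x + q)) := by
  have := h.map_add (-x)
  simpa using this

noncomputable def Phi (x y : Fin d → ℤ) (p : LW d x × LW d y) :
    LW d (x + y) × Σ w : Fin d → ℤ, LW d w × LW d w :=
  ⟨⟨spPi p.1.1 (p.2.1.map (fun q => x + q)),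
      (splice_spec _ _ p.1.2 (shiftSAW x p.2.2)).1⟩,
    ⟨-x + spA p.1.1 (p.2.1.map (fun q => x + q)),
      ⟨(spR p.1.1 (p.2.1.map (fun q => x + q))).reverse.map (fun q => -x + q),
        revSAW (splice_spec _ _ p.1.2 (shiftSAW x p.2.2)).2.1⟩,
      ⟨(spE2 p.1.1 (p.2.1.map (fun q => x + q))).map (fun q => -x + q),
        shiftSAW2 (splice_spec _ _ p.1.2 (shiftSAW x p.2.2)).2.2.1⟩⟩⟩

theorem negadd_inj (x : Fin d → ℤ) : Function.Injective (fun q : Fin d → ℤ => -x + q) :=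
  fun _ _ h => by simpa using congrArg (fun q => x + q) h

theorem Phi_inj (x y : Fin d → ℤ) : Function.Injective (Phi x y) := by
  intro p p' h
  set l1 := p.1.1 with hl1d
  set l2m := p.2.1.map (fun q => x + q) with hl2d
  set l1' := p'.1.1 with hl1d'
  set l2m' := p'.2.1.map (fun q => x + q) with hl2d'
  have spec := splice_spec l1 l2m p.1.2 (shiftSAW x p.2.2)
  have spec' := splice_spec l1' l2m' p'.1.2 (shiftSAW x p'.2.2)
  have hπ : spPi l1 l2m = spPi l1' l2m' :=
    congrArg (fun t : LW d (x+y) × Σ w : Fin d → ℤ, LW d w × LW d w => t.1.1) h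
  have hw : -x + spA l1 l2m = -x + spA l1' l2m' :=
    congrArg (fun t : LW d (x+y) × Σ w : Fin d → ℤ, LW d w × LW d w => t.2.1) h
  have ha : spA l1 l2m = spA l1' l2m' := add_left_cancel hw
  have he1 : (spR l1 l2m).reverse.map (fun q => -x + q)
      = (spR l1' l2m').reverse.map (fun q => -x + q) :=
    congrArg (fun t : LW d (x+y) × Σ w : Fin d → ℤ, LW d w × LW d w => t.2.2.1.1) h
  have hr : spR l1 l2m = spR l1' l2m' := by
    have h1 := (List.map_injective_iff.2 (negadd_inj x)) he1
    exact List.reverse_injective h1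
  have he2m : (spE2 l1 l2m).map (fun q => -x + q) = (spE2 l1' l2m').map (fun q => -x + q) :=
    congrArg (fun t : LW d (x+y) × Σ w : Fin d → ℤ, LW d w × LW d w => t.2.2.2.1) h
  have he2 : spE2 l1 l2m = spE2 l1' l2m' :=
    (List.map_injective_iff.2 (negadd_inj x)) he2m
  -- reconstruct l1
  have hrec1 : l1 = (spPi l1 l2m).take ((spPi l1 l2m).idxOf (spA l1 l2m)) ++ spR l1 l2m := by
    rw [spec.2.2.2.2.1, spec.2.2.2.2.2.2.2.1]
    exact spec.2.2.2.2.2.1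
  have hrec1' : l1' = (spPi l1' l2m').take ((spPi l1' l2m').idxOf (spA l1' l2m'))
      ++ spR l1' l2m' := by
    rw [spec'.2.2.2.2.1, spec'.2.2.2.2.2.2.2.1]
    exact spec'.2.2.2.2.2.1
  have hL1 : l1 = l1' := by
    rw [hrec1, hrec1', hπ, ha, hr]
  -- reconstruct l2m
  have hrec2 : l2m = spE2 l1 l2m
      ++ ((spPi l1 l2m).drop ((spPi l1 l2m).idxOf (spA l1 l2m))).tail := by
    rw [spec.2.2.2.2.1, spec.2.2.2.2.2.2.2.2]
    exact spec.2.2.2.2.2.2.1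
  have hrec2' : l2m' = spE2 l1' l2m'
      ++ ((spPi l1' l2m').drop ((spPi l1' l2m').idxOf (spA l1' l2m'))).tail := by
    rw [spec'.2.2.2.2.1, spec'.2.2.2.2.2.2.2.2]
    exact spec'.2.2.2.2.2.2.1
  have hL2m : l2m = l2m' := by
    rw [hrec2, hrec2', hπ, ha, he2]
  have hL2 : p.2.1 = p'.2.1 := by
    have hinj : Function.Injective (fun q : Fin d → ℤ => x + q) :=
      fun _ _ hq => by simpa using congrArg (fun q => -x + q) hq
    exact (List.map_injective_iff.2 hinj) (hl2d ▸ hl2d' ▸ hL2m)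
  exact Prod.ext (Subtype.ext hL1) (Subtype.ext hL2)

theorem wt_congr (β : ℝ) {l l' : List (Fin d → ℤ)} (h : l.length = l'.length) :
    wt β l = wt β l' := by unfold wt; rw [h]

theorem wt_mul3 (β : ℝ) (a b c e f : List (Fin d → ℤ))
    (ha : 1 ≤ a.length) (hb : 1 ≤ b.length) (hc : 1 ≤ c.length)
    (he : 1 ≤ e.length) (hf : 1 ≤ f.length)
    (hsum : a.length + b.length + c.length = e.length + f.length + 1) :
    wt β a * wt β b * wt β c = wt β e * wt β f := by
  unfold wt
  rw [← ENNReal.ofReal_mul (Real.exp_nonneg _), ← Real.exp_add,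
      ← ENNReal.ofReal_mul (Real.exp_nonneg _), ← Real.exp_add,
      ← ENNReal.ofReal_mul (Real.exp_nonneg _), ← Real.exp_add]
  congr 2
  have h1 : ((a.length - 1 : ℕ) : ℝ) = (a.length : ℝ) - 1 := by
    rw [Nat.cast_sub ha]; norm_num
  have h2 : ((b.length - 1 : ℕ) : ℝ) = (b.length : ℝ) - 1 := by
    rw [Nat.cast_sub hb]; norm_num
  have h3 : ((c.length - 1 : ℕ) : ℝ) = (c.length : ℝ) - 1 := by
    rw [Nat.cast_sub hc]; norm_num
  have h4 : ((e.length - 1 : ℕ) : ℝ) = (e.length : ℝ) - 1 := by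
    rw [Nat.cast_sub he]; norm_num
  have h5 : ((f.length - 1 : ℕ) : ℝ) = (f.length : ℝ) - 1 := by
    rw [Nat.cast_sub hf]; norm_num
  have hcast : (a.length : ℝ) + b.length + c.length = (e.length : ℝ) + f.length + 1 := by
    exact_mod_cast congrArg (fun n : ℕ => (n : ℝ)) hsum
  rw [h1, h2, h3, h4, h5]
  linear_combination (-β) * hcast

theorem Phi_wt (β : ℝ) (x y : Fin d → ℤ) (p : LW d x × LW d y) :
    wt β (Phi x y p).1.1 * (wt β (Phi x y p).2.2.1.1 * wt β (Phi x y p).2.2.2.1)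
      = wt β p.1.1 * wt β p.2.1 := by
  set l1 := p.1.1 with hl1d
  set l2m := p.2.1.map (fun q => x + q) with hl2d
  have spec := splice_spec l1 l2m p.1.2 (shiftSAW x p.2.2)
  have hc1 : (Phi x y p).1.1 = spPi l1 l2m := rfl
  have hc2 : (Phi x y p).2.2.1.1 = (spR l1 l2m).reverse.map (fun q => -x + q) := rfl
  have hc3 : (Phi x y p).2.2.2.1 = (spE2 l1 l2m).map (fun q => -x + q) := rfl
  rw [hc1, hc2, hc3, ← mul_assoc]
  have hw2 : wt β ((spR l1 l2m).reverse.map (fun q => -x + q)) = wt β (spR l1 l2m) :=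
    wt_congr β (by simp)
  have hw3 : wt β ((spE2 l1 l2m).map (fun q => -x + q)) = wt β (spE2 l1 l2m) :=
    wt_congr β (by simp)
  have hw4 : wt β p.2.1 = wt β l2m := wt_congr β (by simp [hl2d])
  rw [hw2, hw3, hw4]
  exact wt_mul3 β _ _ _ _ _ spec.1.one_le_length spec.2.1.one_le_length
    spec.2.2.1.one_le_length p.1.2.one_le_length ((shiftSAW x p.2.2).one_le_length)
    spec.2.2.2.1

theorem tsum_mul_tsum {A B : Type*} (f : A → ℝ≥0∞) (g : B → ℝ≥0∞) :
    (∑' a, f a) * (∑' b, g b) = ∑' q : A × B, f q.1 * g q.2 := by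
  rw [← ENNReal.tsum_mul_right, ENNReal.tsum_prod']
  exact tsum_congr fun a => (ENNReal.tsum_mul_left).symm

end SAW
/-- Supermultiplicativity of the two-point function via the bubble diagram:
`g_β(x) g_β(y) ≤ g_β(x+y) B_d(β)`. -/
theorem twoPoint_supermultiplicative (d : ℕ) (β : ℝ)
    (hfin : ∀ x : Fin d → ℤ, twoPoint d β x ≠ ⊤) (hB : bubble d β ≠ ⊤)
    (x y : Fin d → ℤ) :
    twoPoint d β x * twoPoint d β y ≤ twoPoint d β (x + y) * bubble d β := by
  classical
  have hb : bubble d β = ∑' σ : (Σ w : Fin d → ℤ, SAW.LW d w × SAW.LW d w),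
      SAW.wt β σ.2.1.1 * SAW.wt β σ.2.2.1 := by
    rw [bubble, ENNReal.tsum_sigma']
    congr 1
    funext w
    rw [SAW.twoPoint_eq_tsum β w, sq, SAW.tsum_mul_tsum]
  set G : SAW.LW d (x + y) × (Σ w : Fin d → ℤ, SAW.LW d w × SAW.LW d w) → ℝ≥0∞ :=
    fun t => SAW.wt β t.1.1 * (SAW.wt β t.2.2.1.1 * SAW.wt β t.2.2.2.1) with hG
  calc twoPoint d β x * twoPoint d β y
      = ∑' p : SAW.LW d x × SAW.LW d y, SAW.wt β p.1.1 * SAW.wt β p.2.1 := by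
        rw [SAW.twoPoint_eq_tsum β x, SAW.twoPoint_eq_tsum β y, SAW.tsum_mul_tsum]
    _ = ∑' p : SAW.LW d x × SAW.LW d y, G (SAW.Phi x y p) :=
        tsum_congr fun p => (SAW.Phi_wt β x y p).symm
    _ ≤ ∑' t, G t := ENNReal.tsum_comp_le_tsum_of_injective (SAW.Phi_inj x y) G
    _ = twoPoint d β (x + y) * bubble d β := by
        rw [SAW.twoPoint_eq_tsum β (x + y), hb, SAW.tsum_mul_tsum]
end

section
/- For β > β_c(d), the decay rate τ_β(x) := -lim_{n→∞} (1/n) log g_β([nx]) exists for every x ∈ R^d, where [nx] denotes a lattice approximation of nx. -/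
open scoped ENNReal

namespace SAWAux

variable {d : ℕ}

/-- single lattice step -/
def Step (u v : Fin d → ℤ) : Prop := (∑ i, |v i - u i|) = 1

lemma step_symm {u v : Fin d → ℤ} (h : Step u v) : Step v u := by
  unfold Step at *
  rw [← h]
  exact Finset.sum_congr rfl fun i _ => abs_sub_comm _ _

lemma step_translate {u v w : Fin d → ℤ} : Step (u + w) (v + w) ↔ Step u v := by
  unfold Step
  constructor <;> intro h <;> rw [← h] <;>
    exact Finset.sum_congr rfl fun i _ => by simp

/-- self-avoiding walk as a list of vertices, from `0` to `x`. -/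
def SAWL (x : Fin d → ℤ) (l : List (Fin d → ℤ)) : Prop :=
  l.head? = some 0 ∧ l.getLast? = some x ∧ l.Nodup ∧ l.Chain' Step

noncomputable def wt (β : ℝ) (l : List (Fin d → ℤ)) : ℝ≥0∞ :=
  ENNReal.ofReal (Real.exp β * Real.exp (-β * l.length))

lemma SAWL.ne_nil {x : Fin d → ℤ} {l : List (Fin d → ℤ)} (h : SAWL x l) : l ≠ [] := by
  intro hl; rw [hl] at h; simp [SAWL] at h

/-- boundedness of a SAW path -/
lemma path_bound {N : ℕ} {x : Fin d → ℤ} {ω : Fin (N+1) → Fin d → ℤ}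
    (h : IsSAWPath d N x ω) : ∀ (k : ℕ) (hk : k < N + 1) (i : Fin d), |ω ⟨k, hk⟩ i| ≤ k := by
  intro k
  induction k with
  | zero =>
    intro hk i
    have h0 : (⟨0, hk⟩ : Fin (N+1)) = 0 := rfl
    rw [h0, h.1]
    simp
  | succ k ih =>
    intro hk i
    have hk' : k < N + 1 := by omega
    have hkN : k < N := by omega
    have hstep := h.2.2.2 ⟨k, hkN⟩
    have e1 : (⟨k, hkN⟩ : Fin N).succ = (⟨k+1, hk⟩ : Fin (N+1)) := rfl
    have e2 : (⟨k, hkN⟩ : Fin N).castSucc = (⟨k, hk'⟩ : Fin (N+1)) := rfl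
    rw [e1, e2] at hstep
    have h1 : |ω ⟨k+1, hk⟩ i - ω ⟨k, hk'⟩ i| ≤ 1 := by
      rw [← hstep]
      exact Finset.single_le_sum (f := fun j => |ω ⟨k+1, hk⟩ j - ω ⟨k, hk'⟩ j|) (fun j _ => abs_nonneg _) (Finset.mem_univ i)
    have h2 : |ω ⟨k, hk'⟩ i| ≤ (k : ℤ) := ih hk' i
    have h3 : |ω ⟨k+1, hk⟩ i| ≤ |ω ⟨k, hk'⟩ i| + |ω ⟨k+1, hk⟩ i - ω ⟨k, hk'⟩ i| := by
      have := abs_add_le (ω ⟨k, hk'⟩ i) (ω ⟨k+1, hk⟩ i - ω ⟨k, hk'⟩ i)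
      simpa using this
    push_cast
    linarith

instance finitePath (N : ℕ) (x : Fin d → ℤ) : Finite {ω : Fin (N+1) → Fin d → ℤ // IsSAWPath d N x ω} := by
  let F : {ω : Fin (N+1) → Fin d → ℤ // IsSAWPath d N x ω} →
      (Fin (N+1) → Fin d → Set.Icc (-(N:ℤ)) N) := fun ω j i =>
    ⟨ω.1 j i, by
      have hb := path_bound ω.2 j.1 j.2 i
      have hj' : (⟨j.1, j.2⟩ : Fin (N+1)) = j := rfl
      rw [hj'] at hb
      have hj : (j.1 : ℤ) ≤ (N:ℤ) := by exact_mod_cast Nat.lt_succ_iff.mp j.2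
      have h1 := neg_abs_le (ω.1 j i)
      have h2 := le_abs_self (ω.1 j i)
      exact Set.mem_Icc.mpr ⟨by omega, by omega⟩⟩
  have hF : Function.Injective F := by
    intro a b hab
    apply Subtype.ext; funext j i
    have := congrFun (congrFun hab j) i
    simpa [F, Subtype.ext_iff] using this
  exact Finite.of_injective F hF

/-- helper: tsum of a constant over a finite type -/
lemma tsum_const_finite (T : Type*) [Finite T] (c : ℝ≥0∞) :
    ∑' _ : T, c = (Nat.card T : ℝ≥0∞) * c := by
  have : Fintype T := Fintype.ofFinite T
  rw [tsum_eq_sum (s := Finset.univ) (by simp)]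
  simp [Finset.sum_const, Nat.card_eq_fintype_card, nsmul_eq_mul]

lemma isSAWPath_iff_SAWL {N : ℕ} {x : Fin d → ℤ} (ω : Fin (N+1) → Fin d → ℤ) :
    IsSAWPath d N x ω ↔ SAWL x (List.ofFn ω) := by
  constructor
  · rintro ⟨h0, hlast, hinj, hstep⟩
    refine ⟨?_, ?_, ?_, ?_⟩
    · rw [List.ofFn_succ]; simp [h0]
    · rw [List.getLast?_eq_getElem?]
      rw [List.getElem?_eq_getElem (by simp)]
      simp only [List.length_ofFn, Nat.add_sub_cancel]
      rw [List.getElem_ofFn]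
      exact congrArg some hlast
    · exact List.nodup_ofFn.mpr hinj
    · unfold List.Chain'; rw [List.isChain_iff_getElem]
      intro i hi
      simp only [List.length_ofFn] at hi
      have hiN : i < N := by omega
      have := hstep ⟨i, hiN⟩
      rw [List.getElem_ofFn, List.getElem_ofFn]
      exact this
  · rintro ⟨h0, hlast, hnd, hch⟩
    refine ⟨?_, ?_, List.nodup_ofFn.mp hnd, ?_⟩
    · rw [List.ofFn_succ] at h0; simpa using h0
    · rw [List.getLast?_eq_getElem?] at hlast
      rw [List.getElem?_eq_getElem (by simp)] at hlast
      simp only [List.length_ofFn, Nat.add_sub_cancel] at hlast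
      rw [List.getElem_ofFn] at hlast
      exact Option.some_injective _ hlast
    · intro j
      unfold List.Chain' at hch; rw [List.isChain_iff_getElem] at hch
      have := hch j.1 (by simp only [List.length_ofFn]; omega)
      rw [List.getElem_ofFn, List.getElem_ofFn] at this
      exact this

lemma ofFn_get_cast {α : Type*} {n : ℕ} {l : List α} (hlen : n = l.length) :
    List.ofFn (fun j : Fin n => l.get (Fin.cast hlen j)) = l := by
  apply List.ext_get (by simp [hlen])
  intro i h1 h2
  rw [List.get_ofFn]
  rfl

noncomputable def pathEquiv (x : Fin d → ℤ) :
    (Σ N : ℕ, {ω : Fin (N+1) → Fin d → ℤ // IsSAWPath d N x ω}) ≃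
      {l : List (Fin d → ℤ) // SAWL x l} :=
  Equiv.ofBijective (fun σ => ⟨List.ofFn σ.2.1, (isSAWPath_iff_SAWL _).mp σ.2.2⟩) (by
    constructor
    · rintro ⟨N₁, ω₁, h₁⟩ ⟨N₂, ω₂, h₂⟩ h
      simp only [Subtype.mk.injEq] at h
      have hN : N₁ = N₂ := by
        have := congrArg List.length h; simpa using this
      subst hN
      have hω : ω₁ = ω₂ := List.ofFn_injective h
      subst hω
      rfl
    · rintro ⟨l, hl⟩
      have hne : l ≠ [] := hl.ne_nil
      have hlen : l.length - 1 + 1 = l.length :=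
        Nat.succ_pred_eq_of_pos (List.length_pos_iff.mpr hne)
      refine ⟨⟨l.length - 1, fun j => l.get (Fin.cast hlen j), ?_⟩, ?_⟩
      · rw [isSAWPath_iff_SAWL, ofFn_get_cast hlen]
        exact hl
      · apply Subtype.ext
        exact ofFn_get_cast hlen)

lemma twoPoint_eq_tsum_saw (β : ℝ) (x : Fin d → ℤ) :
    twoPoint d β x = ∑' l : {l : List (Fin d → ℤ) // SAWL x l}, wt β l.1 := by
  rw [← (pathEquiv x).tsum_eq (fun l : {l : List (Fin d → ℤ) // SAWL x l} => wt β l.1)]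
  have hcongr : ∀ σ : (Σ N : ℕ, {ω : Fin (N+1) → Fin d → ℤ // IsSAWPath d N x ω}),
      wt β ((pathEquiv x) σ).1 = wt β (List.ofFn σ.2.1) := fun _ => rfl
  rw [tsum_congr hcongr, ENNReal.tsum_sigma']
  unfold twoPoint
  apply tsum_congr
  intro N
  have hwt : ∀ ω : {ω : Fin (N+1) → Fin d → ℤ // IsSAWPath d N x ω},
      wt β (List.ofFn ω.1) = ENNReal.ofReal (Real.exp (-β * N)) := by
    intro ω
    unfold wt
    rw [List.length_ofFn, ← Real.exp_add]
    congr 1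
    push_cast
    ring_nf
  rw [tsum_congr hwt, tsum_const_finite]
  rfl

/-- ℓ¹ norm -/
def norm1 (v : Fin d → ℤ) : ℕ := ∑ i, (v i).natAbs

lemma exists_saw_list (v : Fin d → ℤ) :
    ∃ l : List (Fin d → ℤ), SAWL v l ∧ l.length = norm1 v + 1 ∧ ∀ u ∈ l, norm1 u ≤ norm1 v := by
  generalize hn : norm1 v = n
  induction n generalizing v with
  | zero =>
    have hv : v = 0 := by
      funext i
      have := Finset.sum_eq_zero_iff.mp hn i (Finset.mem_univ i)
      simpa [Int.natAbs_eq_zero] using this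
    subst hv
    exact ⟨[0], ⟨rfl, rfl, List.nodup_singleton _, List.isChain_singleton _⟩, by simp [hn], by simp [hn]⟩
  | succ n ih =>
    have hex : ∃ i₀, v i₀ ≠ 0 := by
      by_contra hc
      push_neg at hc
      have : norm1 v = 0 := Finset.sum_eq_zero fun i _ => by simp [hc i]
      omega
    obtain ⟨i₀, hi₀⟩ := hex
    set sgn : ℤ := if 0 < v i₀ then 1 else -1 with hsgn
    set w : Fin d → ℤ := Function.update v i₀ (v i₀ - sgn) with hw
    have hwa : (w i₀).natAbs + 1 = (v i₀).natAbs := by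
      simp only [hw, Function.update_self, hsgn]
      split <;> omega
    have hnormw : norm1 w = n := by
      have hsplit : ∀ u : Fin d → ℤ, norm1 u = (u i₀).natAbs + ∑ i ∈ Finset.univ.erase i₀, (u i).natAbs := by
        intro u
        rw [norm1, ← Finset.add_sum_erase _ _ (Finset.mem_univ i₀)]
      have heq : ∑ i ∈ Finset.univ.erase i₀, (w i).natAbs = ∑ i ∈ Finset.univ.erase i₀, (v i).natAbs :=
        Finset.sum_congr rfl fun i hi => by
          rw [hw, Function.update_of_ne (Finset.ne_of_mem_erase hi)]
      have h1 := hsplit w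
      have h2 := hsplit v
      omega
    obtain ⟨l', hl', hlen', hbd'⟩ := ih w hnormw
    refine ⟨l' ++ [v], ⟨?_, ?_, ?_, ?_⟩, ?_, ?_⟩
    · rw [List.head?_append, hl'.1]; rfl
    · rw [List.getLast?_concat]
    · rw [List.nodup_append]
      refine ⟨hl'.2.2.1, List.nodup_singleton _, ?_⟩
      intro u hu u' hu2 heq
      have : u' = v := by simpa using hu2
      subst this
      subst heq
      have := hbd' u hu
      omega
    · unfold List.Chain'; rw [List.isChain_append]
      refine ⟨hl'.2.2.2, List.isChain_singleton _, ?_⟩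
      intro p hp q hq
      rw [hl'.2.1] at hp
      have hp' : w = p := by simpa using hp
      have hq' : v = q := by simpa using hq
      rw [← hp', ← hq']
      show Step w v
      unfold Step
      rw [Finset.sum_eq_single i₀]
      · have h1 : v i₀ - w i₀ = sgn := by simp [hw]
        rw [h1, hsgn]
        split <;> simp
      · intro i _ hi
        rw [hw, Function.update_of_ne hi]
        simp
      · intro h; exact absurd (Finset.mem_univ i₀) h
    · simp [hlen', hn, hnormw]
    · intro u hu
      rcases List.mem_append.mp hu with h | h
      · have := hbd' u h; omega
      · have : u = v := by simpa using h
        subst this; omega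

lemma one_le_wt_aux {β : ℝ} {l : List (Fin d → ℤ)} :
    wt β l = ENNReal.ofReal (Real.exp (-β * (l.length - 1))) := by
  unfold wt
  rw [← Real.exp_add]
  congr 1
  ring

lemma le_twoPoint (β : ℝ) (v : Fin d → ℤ) :
    ENNReal.ofReal (Real.exp (-β * norm1 v)) ≤ twoPoint d β v := by
  obtain ⟨l, hl, hlen, -⟩ := exists_saw_list v
  rw [twoPoint_eq_tsum_saw]
  have := ENNReal.le_tsum (f := fun l : {l : List (Fin d → ℤ) // SAWL v l} => wt β l.1) ⟨l, hl⟩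
  refine le_trans (le_of_eq ?_) this
  rw [one_le_wt_aux]
  congr 2
  rw [hlen]
  push_cast
  ring

lemma twoPoint_pos (β : ℝ) (v : Fin d → ℤ) : 0 < twoPoint d β v :=
  lt_of_lt_of_le (by positivity) (le_twoPoint β v)

lemma twoPoint_le_susc (β : ℝ) (v : Fin d → ℤ) :
    twoPoint d β v ≤ ∑' x : Fin d → ℤ, twoPoint d β x :=
  ENNReal.le_tsum v

lemma twoPoint_anti {β β' : ℝ} (h : β' ≤ β) (v : Fin d → ℤ) :
    twoPoint d β v ≤ twoPoint d β' v := by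
  unfold twoPoint
  refine ENNReal.tsum_le_tsum fun N => ?_
  refine mul_le_mul_right (ENNReal.ofReal_le_ofReal (Real.exp_le_exp.mpr ?_)) _
  have : (0:ℝ) ≤ N := Nat.cast_nonneg N
  nlinarith

lemma sum_card_le (N : ℕ) :
    ∑' x : Fin d → ℤ, (sawCountTo d N x : ℝ≥0∞) ≤ ((3:ℝ≥0∞) ^ d) ^ N := by
  have h1 : ∀ x : Fin d → ℤ, (sawCountTo d N x : ℝ≥0∞) =
      ∑' _ : {ω : Fin (N+1) → Fin d → ℤ // IsSAWPath d N x ω}, (1:ℝ≥0∞) := by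
    intro x; rw [tsum_const_finite]; simp [sawCountTo]
  have hsig : ∑' σ : (Σ x : Fin d → ℤ, {ω : Fin (N+1) → Fin d → ℤ // IsSAWPath d N x ω}), (1:ℝ≥0∞)
      = ∑' (x : Fin d → ℤ) (_ : {ω : Fin (N+1) → Fin d → ℤ // IsSAWPath d N x ω}), (1:ℝ≥0∞) :=
    ENNReal.tsum_sigma' (fun _ => (1:ℝ≥0∞))
  rw [tsum_congr h1, ← hsig]
  set T := Fin N → Fin d → (Finset.Icc (-1:ℤ) 1) with hT
  let J : (Σ x : Fin d → ℤ, {ω : Fin (N+1) → Fin d → ℤ // IsSAWPath d N x ω}) → T := fun σ j i =>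
    ⟨σ.2.1 j.succ i - σ.2.1 j.castSucc i, by
      have hs := σ.2.2.2.2.2 j
      have habs : |σ.2.1 j.succ i - σ.2.1 j.castSucc i| ≤ 1 := by
        rw [← hs]
        exact Finset.single_le_sum (f := fun i => |σ.2.1 j.succ i - σ.2.1 j.castSucc i|)
          (fun _ _ => abs_nonneg _) (Finset.mem_univ i)
      have h1 := neg_abs_le (σ.2.1 j.succ i - σ.2.1 j.castSucc i)
      have h2 := le_abs_self (σ.2.1 j.succ i - σ.2.1 j.castSucc i)
      rw [Finset.mem_Icc]
      omega⟩
  have hJ : Function.Injective J := by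
    rintro ⟨x₁, ω₁, h₁⟩ ⟨x₂, ω₂, h₂⟩ h
    have key : ∀ (k : ℕ) (hk : k < N + 1), ω₁ ⟨k, hk⟩ = ω₂ ⟨k, hk⟩ := by
      intro k
      induction k with
      | zero =>
        intro hk
        have e0 : (⟨0, hk⟩ : Fin (N+1)) = 0 := rfl
        rw [e0, h₁.1, h₂.1]
      | succ k ihk =>
        intro hk
        have hk' : k < N + 1 := by omega
        have hkN : k < N := by omega
        funext i
        have hd := congrFun (congrFun h ⟨k, hkN⟩) i
        simp only [J, Subtype.mk.injEq] at hd
        have e1 : (⟨k, hkN⟩ : Fin N).succ = (⟨k+1, hk⟩ : Fin (N+1)) := rfl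
        have e2 : (⟨k, hkN⟩ : Fin N).castSucc = (⟨k, hk'⟩ : Fin (N+1)) := rfl
        rw [e1, e2] at hd
        have := congrFun (ihk hk') i
        omega
    have hω : ω₁ = ω₂ := by
      funext j
      have := key j.1 j.2
      simpa [Fin.eta] using this
    subst hω
    have hx : x₁ = x₂ := by rw [← h₁.2.1, ← h₂.2.1]
    subst hx
    rfl
  calc ∑' σ : (Σ x : Fin d → ℤ, {ω : Fin (N+1) → Fin d → ℤ // IsSAWPath d N x ω}), (1:ℝ≥0∞)
      = ∑' σ : (Σ x : Fin d → ℤ, {ω : Fin (N+1) → Fin d → ℤ // IsSAWPath d N x ω}),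
          (fun _ : T => (1:ℝ≥0∞)) (J σ) := rfl
    _ ≤ ∑' _ : T, (1:ℝ≥0∞) := ENNReal.tsum_comp_le_tsum_of_injective hJ _
    _ = (Nat.card T : ℝ≥0∞) * 1 := tsum_const_finite T 1
    _ ≤ ((3:ℝ≥0∞) ^ d) ^ N := by
        rw [mul_one]
        have hc : Nat.card T = (3 ^ d) ^ N := by
          rw [hT, Nat.card_pi]
          have hinner : Nat.card (Fin d → (Finset.Icc (-1:ℤ) 1)) = 3 ^ d := by
            rw [Nat.card_pi]
            have h3 : Nat.card (Finset.Icc (-1:ℤ) 1) = 3 := by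
              rw [Nat.card_eq_fintype_card, Fintype.card_coe, Int.card_Icc]
              rfl
            rw [Finset.prod_const, h3, Finset.card_univ, Fintype.card_fin]
          simp only [hinner]
          rw [Finset.prod_const, Finset.card_univ, Fintype.card_fin]
        rw [hc]
        push_cast
        exact le_refl _


lemma susc_finite_large : ∃ β₀ : ℝ, (∑' x : Fin d → ℤ, twoPoint d β₀ x) ≠ ⊤ := by
  refine ⟨d * Real.log 3 + 1, ?_⟩
  set β₀ : ℝ := d * Real.log 3 + 1 with hβ₀
  set r : ℝ≥0∞ := ((3:ℝ≥0∞) ^ d) * ENNReal.ofReal (Real.exp (-β₀)) with hr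
  have h3 : (3:ℝ≥0∞) ^ d = ENNReal.ofReal ((3:ℝ) ^ d) := by
    rw [ENNReal.ofReal_pow (by norm_num)]
    norm_num
  have hrval : r = ENNReal.ofReal ((3:ℝ) ^ d * Real.exp (-β₀)) := by
    rw [hr, h3, ENNReal.ofReal_mul (by positivity)]
  have hrlt : r < 1 := by
    rw [hrval]
    apply ENNReal.ofReal_lt_one.mpr
    have h3e : (3:ℝ) ^ d = Real.exp (d * Real.log 3) := by
      rw [← Real.exp_log (show (0:ℝ) < 3 by norm_num)]
      rw [← Real.exp_nat_mul]
      rw [Real.exp_log (show (0:ℝ) < 3 by norm_num)]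
    rw [h3e, ← Real.exp_add]
    have harg : (d:ℝ) * Real.log 3 + -β₀ = -1 := by rw [hβ₀]; ring
    rw [harg]
    have := Real.exp_lt_exp.mpr (show (-1:ℝ) < 0 by norm_num)
    rwa [Real.exp_zero] at this
  have hbound : (∑' x : Fin d → ℤ, twoPoint d β₀ x) ≤ ∑' N : ℕ, r ^ N := by
    unfold twoPoint
    rw [ENNReal.tsum_comm]
    refine ENNReal.tsum_le_tsum fun N => ?_
    rw [ENNReal.tsum_mul_right]
    have hwN : ENNReal.ofReal (Real.exp (-β₀ * N)) = ENNReal.ofReal (Real.exp (-β₀)) ^ N := by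
      rw [← ENNReal.ofReal_pow (Real.exp_nonneg _), ← Real.exp_nat_mul]
      ring_nf
    calc (∑' x : Fin d → ℤ, (sawCountTo d N x : ℝ≥0∞)) * ENNReal.ofReal (Real.exp (-β₀ * N))
        ≤ ((3:ℝ≥0∞) ^ d) ^ N * ENNReal.ofReal (Real.exp (-β₀ * N)) :=
          mul_le_mul_left (sum_card_le N) _
      _ = r ^ N := by rw [hwN, hr, mul_pow]
  have hgeom : ∑' N : ℕ, r ^ N = (1 - r)⁻¹ := ENNReal.tsum_geometric r
  have hfin : (∑' N : ℕ, r ^ N) ≠ ⊤ := by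
    rw [hgeom]
    exact ENNReal.inv_ne_top.mpr fun h0 => absurd (tsub_eq_zero_iff_le.mp h0) (not_le.mpr hrlt)
  exact fun htop => hfin (top_unique (htop ▸ hbound))

lemma susc_finite_of_gt {β : ℝ} (hβ : betaCrit d < β) :
    (∑' x : Fin d → ℤ, twoPoint d β x) ≠ ⊤ := by
  set S := {β : ℝ | ∑' x : Fin d → ℤ, twoPoint d β x ≠ ⊤} with hS
  have hne : S.Nonempty := susc_finite_large
  have hex : ∃ β' ∈ S, β' < β := by
    by_cases hb : BddBelow S
    · exact (csInf_lt_iff hb hne).mp hβ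
    · by_contra hc
      push_neg at hc
      exact hb ⟨β, fun b hb' => le_of_not_gt fun hlt => absurd (hc b hb') (not_le.mpr hlt)⟩
  obtain ⟨β', hβ'S, hβ'lt⟩ := hex
  have hmono : (∑' x : Fin d → ℤ, twoPoint d β x) ≤ ∑' x : Fin d → ℤ, twoPoint d β' x :=
    ENNReal.tsum_le_tsum fun v => twoPoint_anti hβ'lt.le v
  exact fun htop => hβ'S (top_unique (htop ▸ hmono))

lemma twoPoint_ne_top {β : ℝ} (hβ : betaCrit d < β) (v : Fin d → ℤ) :
    twoPoint d β v ≠ ⊤ :=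
  fun htop => susc_finite_of_gt hβ (top_unique (htop ▸ twoPoint_le_susc β v))

lemma one_le_twoPoint_zero (β : ℝ) : 1 ≤ twoPoint d β 0 := by
  have := le_twoPoint (d := d) β 0
  simpa [norm1] using this

lemma one_le_bubble (β : ℝ) : 1 ≤ bubble d β := by
  have h0 : (1:ℝ≥0∞) ≤ twoPoint d β 0 ^ 2 := one_le_pow_of_one_le' (one_le_twoPoint_zero β) 2
  exact le_trans h0 (ENNReal.le_tsum 0)

lemma bubble_ne_top {β : ℝ} (hβ : betaCrit d < β) : bubble d β ≠ ⊤ := by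
  have hb : bubble d β ≤ (∑' x : Fin d → ℤ, twoPoint d β x) * (∑' x : Fin d → ℤ, twoPoint d β x) := by
    unfold bubble
    rw [← ENNReal.tsum_mul_right]
    refine ENNReal.tsum_le_tsum fun v => ?_
    rw [sq]
    exact mul_le_mul_right (twoPoint_le_susc β v) _
  exact fun htop => ENNReal.mul_ne_top (susc_finite_of_gt hβ) (susc_finite_of_gt hβ)
    (top_unique (htop ▸ hb))

lemma mem_of_getLast? {α : Type*} {l : List α} {u : α} (h : l.getLast? = some u) : u ∈ l := by
  obtain ⟨h', rfl⟩ := List.mem_getLast?_eq_getLast (by rw [h]; rfl)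
  exact List.getLast_mem h'

lemma step_sub {u v w : Fin d → ℤ} (h : Step u v) : Step (u - w) (v - w) := by
  have := step_translate (u := u) (v := v) (w := -w) |>.mpr h
  simpa [sub_eq_add_neg] using this

lemma sub_add_cancel'' (u x : Fin d → ℤ) : u - x + x = u := by
  funext i; simp

lemma surgery {x y : Fin d → ℤ} {l1 l2 : List (Fin d → ℤ)}
    (h1 : SAWL x l1) (h2 : SAWL y l2) :
    ∃ (z : Fin d → ℤ) (ρ η1 η2 : List (Fin d → ℤ)),
      SAWL (x + y) ρ ∧ SAWL z η1 ∧ SAWL z η2 ∧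
      ρ.length + η1.length + η2.length = l1.length + l2.length + 1 ∧
      l1 = ρ.takeWhile (fun u => decide (u ≠ z + x)) ++ (η1.map (· + x)).reverse ∧
      l2 = η2 ++ ((ρ.dropWhile (fun u => decide (u ≠ z + x))).tail.map (· - x)) := by
  classical
  set L2 : List (Fin d → ℤ) := l2.map (· + x) with hL2def
  have hL2head : L2.head? = some x := by
    rw [hL2def, List.head?_map, h2.1]; simp
  have hL2last : L2.getLast? = some (y + x) := by
    rw [hL2def, List.getLast?_map, h2.2.1]; rfl
  have haddinj : Function.Injective (fun u : Fin d → ℤ => u + x) :=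
    fun u v h => by simpa using congrArg (· - x) h
  have hsubinj : Function.Injective (fun u : Fin d → ℤ => u - x) :=
    fun u v h => by simpa [sub_add_cancel''] using congrArg (· + x) h
  have hL2nd : L2.Nodup := h2.2.2.1.map haddinj
  have hL2ch : L2.Chain' Step := by
    unfold List.Chain'; rw [hL2def, List.isChain_map]
    exact (h2.2.2.2 : List.IsChain Step l2).imp fun ⦃a b⦄ h => step_translate.mpr h
  set p : (Fin d → ℤ) → Bool := fun u => decide (u ∉ L2) with hpdef
  set a : List (Fin d → ℤ) := l1.takeWhile p with hadef
  set r : List (Fin d → ℤ) := l1.dropWhile p with hrdef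
  have hsplit1 : a ++ r = l1 := List.takeWhile_append_dropWhile
  have hxL2 : x ∈ L2 := List.mem_of_mem_head? (by rw [hL2head]; rfl)
  have hr : r ≠ [] := by
    intro h0
    have := List.dropWhile_eq_nil_iff.mp (hrdef ▸ h0) x (mem_of_getLast? h1.2.1)
    simp [hpdef] at this
    exact this hxL2
  have hzhead : p (r.head hr) = false := List.head_dropWhile_not p hr
  set z : Fin d → ℤ := r.head hr with hzdef
  have hzL2 : z ∈ L2 := by
    simpa [hpdef] using hzhead
  have hrcons : r = z :: r.tail := (List.cons_head_tail hr).symm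
  have ha_not : ∀ u ∈ a, u ∉ L2 := by
    intro u hu
    have := List.mem_takeWhile_imp (hadef ▸ hu)
    simpa [hpdef] using this
  -- second split
  set q : (Fin d → ℤ) → Bool := fun u => decide (u ≠ z) with hqdef
  set c : List (Fin d → ℤ) := L2.takeWhile q with hcdef
  set dd : List (Fin d → ℤ) := L2.dropWhile q with hdddef
  have hsplit2 : c ++ dd = L2 := List.takeWhile_append_dropWhile
  have hdd : dd ≠ [] := by
    intro h0
    have := List.dropWhile_eq_nil_iff.mp (hdddef ▸ h0) z hzL2
    simp [hqdef] at this
  have hddhead : q (dd.head hdd) = false := List.head_dropWhile_not q hdd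
  have hddz : dd.head hdd = z := by
    simpa [hqdef] using hddhead
  have hddcons : dd = z :: dd.tail := by
    rw [← hddz]
    exact (List.cons_head_tail hdd).symm
  have hc_ne : ∀ u ∈ c, u ≠ z := by
    intro u hu
    have := List.mem_takeWhile_imp (hcdef ▸ hu)
    simpa [hqdef] using this
  -- the pieces
  refine ⟨z - x, a ++ dd, (r.reverse).map (fun u => u - x), (c ++ [z]).map (fun u => u - x),
    ?_, ?_, ?_, ?_, ?_, ?_⟩
  · -- SAWL (x+y) (a ++ dd)
    refine ⟨?_, ?_, ?_, ?_⟩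
    · rw [List.head?_append]
      cases ha : a with
      | nil =>
        have hl1r : l1 = r := by rw [← hsplit1, ha]; rfl
        have hh := h1.1
        rw [hl1r, hrcons] at hh
        simp only [List.head?_cons, Option.some.injEq] at hh
        rw [hddcons]
        simp [hh]
      | cons u a' =>
        have : l1.head? = some u := by rw [← hsplit1, ha]; rfl
        have hu0 : u = 0 := by
          have := this.symm.trans h1.1
          simpa using this
        simp [hu0]
    · rw [List.getLast?_append]
      have hddl : dd.getLast? = some (y + x) := by
        rw [← hL2last, ← hsplit2, List.getLast?_append]
        cases hddl : dd.getLast? with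
        | none => exact absurd (List.getLast?_eq_none_iff.mp hddl) hdd
        | some w => rfl
      rw [hddl]
      have hxy : y + x = x + y := by funext i; simp [add_comm]
      rw [hxy]
      rfl
    · rw [List.nodup_append]
      refine ⟨(List.takeWhile_sublist p).nodup h1.2.2.1,
        (List.dropWhile_sublist q).nodup hL2nd, ?_⟩
      intro u hu u' hu' heq
      subst heq
      exact ha_not u hu ((List.dropWhile_sublist q).subset hu')
    · unfold List.Chain'; rw [List.isChain_append]
      have hjunc := List.isChain_append.mp (hsplit1 ▸ h1.2.2.2)
      refine ⟨hjunc.1, (hL2ch : List.IsChain Step L2).suffix (List.dropWhile_suffix q), ?_⟩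
      · intro u hu v hv
        have hvz : z = v := by
          rw [hddcons] at hv
          simpa using hv
        subst hvz
        refine hjunc.2.2 u hu z ?_
        rw [hrcons]
        rfl
  · -- SAWL (z - x) η1
    refine ⟨?_, ?_, ?_, ?_⟩
    · rw [List.head?_map, List.head?_reverse]
      have hrl : r.getLast? = some x := by
        rw [← h1.2.1, ← hsplit1, List.getLast?_append]
        cases hrl : r.getLast? with
        | none => exact absurd (List.getLast?_eq_none_iff.mp hrl) hr
        | some w => rfl
      rw [hrl]
      simp
    · rw [List.getLast?_map, List.getLast?_reverse]
      rw [hrcons]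
      rfl
    · exact (List.nodup_reverse.mpr ((List.dropWhile_sublist p).nodup h1.2.2.1)).map hsubinj
    · unfold List.Chain'; rw [List.isChain_map]
      have hrch : r.Chain' Step := (h1.2.2.2 : List.IsChain Step l1).suffix (hrdef ▸ List.dropWhile_suffix p)
      have : r.reverse.Chain' Step := List.isChain_reverse.mpr ((hrch : List.IsChain Step r).imp fun ⦃a b⦄ h => step_symm h)
      exact (this : List.IsChain Step _).imp fun ⦃a b⦄ h => step_sub h
  · -- SAWL (z - x) η2
    refine ⟨?_, ?_, ?_, ?_⟩
    · rw [List.head?_map]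
      cases hc : c with
      | nil =>
        have hL2dd : L2 = dd := by rw [← hsplit2, hc]; rfl
        have hh := hL2head
        rw [hL2dd, hddcons] at hh
        simp only [List.head?_cons, Option.some.injEq] at hh
        simp [hh]
      | cons u c' =>
        have : L2.head? = some u := by rw [← hsplit2, hc]; rfl
        have hux : u = x := by
          have := this.symm.trans hL2head
          simpa using this
        simp [hux]
    · rw [List.getLast?_map, List.getLast?_concat]
      rfl
    · refine (List.Sublist.nodup ?_ hL2nd).map hsubinj
      refine List.IsPrefix.sublist ⟨dd.tail, ?_⟩
      rw [List.append_assoc, List.singleton_append, ← hddcons, hsplit2]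
    · unfold List.Chain'; rw [List.isChain_map]
      refine ((hL2ch : List.IsChain Step L2).prefix ⟨dd.tail, ?_⟩).imp fun ⦃a b⦄ h => step_sub h
      rw [List.append_assoc, List.singleton_append, ← hddcons, hsplit2]
  · -- lengths
    have e1 : a.length + r.length = l1.length := by
      rw [← List.length_append, hsplit1]
    have e2 : c.length + dd.length = l2.length := by
      rw [← List.length_append, hsplit2, hL2def, List.length_map]
    simp only [List.length_append, List.length_map, List.length_reverse,
      List.length_cons, List.length_nil]
    omega
  · -- reconstruction 1
    have hzx : z - x + x = z := sub_add_cancel'' z x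
    simp only [hzx]
    have hmap : (((r.reverse).map (fun u => u - x)).map (· + x)).reverse = r := by
      rw [List.map_map]
      have : ((· + x) ∘ (fun u => u - x)) = id := by
        funext u; simp [sub_add_cancel'']
      rw [this, List.map_id, List.reverse_reverse]
    rw [hmap]
    have htw : (a ++ dd).takeWhile (fun u => decide (u ≠ z)) = a := by
      rw [List.takeWhile_append_of_pos ?_]
      · rw [hddcons, List.takeWhile_cons_of_neg (by simp), List.append_nil]
      · intro u hu
        simp only [decide_eq_true_eq]
        intro huz
        exact ha_not u hu (huz ▸ hzL2)
    rw [htw, hsplit1]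
  · -- reconstruction 2
    have hzx : z - x + x = z := sub_add_cancel'' z x
    simp only [hzx]
    have hdw : (a ++ dd).dropWhile (fun u => decide (u ≠ z)) = dd := by
      rw [List.dropWhile_append_of_pos ?_]
      · rw [hddcons, List.dropWhile_cons_of_neg (by simp), ← hddcons]
      · intro u hu
        simp only [decide_eq_true_eq]
        intro huz
        exact ha_not u hu (huz ▸ hzL2)
    rw [hdw]
    have : dd.tail.map (fun u => u - x) = dd.tail.map (· - x) := rfl
    rw [← List.map_append]
    have happ : (c ++ [z]) ++ dd.tail = L2 := by
      rw [List.append_assoc, List.singleton_append, ← hddcons, hsplit2]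
    rw [happ, hL2def, List.map_map]
    have hid : ((fun u => u - x) ∘ (· + x)) = id := by
      funext u; simp
    rw [hid, List.map_id]

def Cod (d : ℕ) (x y : Fin d → ℤ) : Type :=
  Σ z : Fin d → ℤ, ({l : List (Fin d → ℤ) // SAWL (x + y) l} ×
    {l : List (Fin d → ℤ) // SAWL z l} × {l : List (Fin d → ℤ) // SAWL z l})

lemma surgery' (x y : Fin d → ℤ) (pq : {l : List (Fin d → ℤ) // SAWL x l} × {l : List (Fin d → ℤ) // SAWL y l}) :
    ∃ c : Cod d x y,
      c.2.1.1.length + c.2.2.1.1.length + c.2.2.2.1.length = pq.1.1.length + pq.2.1.length + 1 ∧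
      pq.1.1 = c.2.1.1.takeWhile (fun u => decide (u ≠ c.1 + x)) ++ (c.2.2.1.1.map (· + x)).reverse ∧
      pq.2.1 = c.2.2.2.1 ++ ((c.2.1.1.dropWhile (fun u => decide (u ≠ c.1 + x))).tail.map (· - x)) := by
  obtain ⟨z, ρ, η1, η2, hρ, hη1, hη2, hlen, he1, he2⟩ := surgery pq.1.2 pq.2.2
  exact ⟨⟨z, ⟨ρ, hρ⟩, ⟨η1, hη1⟩, ⟨η2, hη2⟩⟩, hlen, he1, he2⟩

noncomputable def Phi (x y : Fin d → ℤ)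
    (pq : {l : List (Fin d → ℤ) // SAWL x l} × {l : List (Fin d → ℤ) // SAWL y l}) : Cod d x y :=
  (surgery' x y pq).choose

lemma Phi_spec (x y : Fin d → ℤ) (pq : {l : List (Fin d → ℤ) // SAWL x l} × {l : List (Fin d → ℤ) // SAWL y l}) :
    (Phi x y pq).2.1.1.length + (Phi x y pq).2.2.1.1.length + (Phi x y pq).2.2.2.1.length
        = pq.1.1.length + pq.2.1.length + 1 ∧
      pq.1.1 = (Phi x y pq).2.1.1.takeWhile (fun u => decide (u ≠ (Phi x y pq).1 + x)) ++
        ((Phi x y pq).2.2.1.1.map (· + x)).reverse ∧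
      pq.2.1 = (Phi x y pq).2.2.2.1 ++
        (((Phi x y pq).2.1.1.dropWhile (fun u => decide (u ≠ (Phi x y pq).1 + x))).tail.map (· - x)) :=
  (surgery' x y pq).choose_spec

lemma Phi_injective (x y : Fin d → ℤ) : Function.Injective (Phi x y) := by
  intro pq1 pq2 h
  obtain ⟨-, e11, e12⟩ := Phi_spec x y pq1
  obtain ⟨-, e21, e22⟩ := Phi_spec x y pq2
  rw [h] at e11 e12
  have h1 : pq1.1 = pq2.1 := Subtype.ext (e11.trans e21.symm)
  have h2 : pq1.2 = pq2.2 := Subtype.ext (e12.trans e22.symm)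
  exact Prod.ext h1 h2

lemma wt_mul_of_len {β : ℝ} {l1 l2 m1 m2 m3 : List (Fin d → ℤ)}
    (h : m1.length + m2.length + m3.length = l1.length + l2.length + 1) :
    wt β l1 * wt β l2 = wt β m1 * wt β m2 * wt β m3 := by
  unfold wt
  rw [← ENNReal.ofReal_mul (by positivity), ← ENNReal.ofReal_mul (by positivity),
    ← ENNReal.ofReal_mul (by positivity)]
  congr 1
  have hc : (m1.length : ℝ) + m2.length + m3.length = (l1.length : ℝ) + l2.length + 1 := by
    exact_mod_cast h
  simp only [← Real.exp_add]
  congr 1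
  linear_combination β * hc

lemma key_ineq (β : ℝ) (x y : Fin d → ℤ) :
    twoPoint d β x * twoPoint d β y ≤ bubble d β * twoPoint d β (x + y) := by
  classical
  have hl : twoPoint d β x * twoPoint d β y =
      ∑' pq : {l : List (Fin d → ℤ) // SAWL x l} × {l : List (Fin d → ℤ) // SAWL y l},
        wt β pq.1.1 * wt β pq.2.1 := by
    rw [twoPoint_eq_tsum_saw β x, twoPoint_eq_tsum_saw β y, ENNReal.tsum_prod']
    rw [← ENNReal.tsum_mul_right]
    apply tsum_congr
    intro aa
    rw [← ENNReal.tsum_mul_left]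
  have hinner : ∀ z : Fin d → ℤ,
      (∑' t : ({l : List (Fin d → ℤ) // SAWL (x+y) l} ×
          {l : List (Fin d → ℤ) // SAWL z l} × {l : List (Fin d → ℤ) // SAWL z l}),
        wt β t.1.1 * wt β t.2.1.1 * wt β t.2.2.1)
      = twoPoint d β (x+y) * (twoPoint d β z * twoPoint d β z) := by
    intro z
    rw [twoPoint_eq_tsum_saw β (x+y), twoPoint_eq_tsum_saw β z, ENNReal.tsum_prod']
    have hstep : ∀ aa : {l : List (Fin d → ℤ) // SAWL (x+y) l},
        (∑' b : ({l : List (Fin d → ℤ) // SAWL z l} × {l : List (Fin d → ℤ) // SAWL z l}),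
          wt β aa.1 * wt β b.1.1 * wt β b.2.1)
        = wt β aa.1 * ((∑' l : {l : List (Fin d → ℤ) // SAWL z l}, wt β l.1) *
            (∑' l : {l : List (Fin d → ℤ) // SAWL z l}, wt β l.1)) := by
      intro aa
      rw [ENNReal.tsum_prod']
      have h1 : ∀ b1 : {l : List (Fin d → ℤ) // SAWL z l},
          (∑' b2 : {l : List (Fin d → ℤ) // SAWL z l}, wt β aa.1 * wt β b1.1 * wt β b2.1)
          = wt β aa.1 * (wt β b1.1 * (∑' l : {l : List (Fin d → ℤ) // SAWL z l}, wt β l.1)) := by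
        intro b1
        rw [ENNReal.tsum_mul_left]
        ring
      rw [tsum_congr h1, ENNReal.tsum_mul_left, ENNReal.tsum_mul_right]
    rw [tsum_congr hstep, ENNReal.tsum_mul_right]
  have hr : (∑' c : Cod d x y, wt β c.2.1.1 * wt β c.2.2.1.1 * wt β c.2.2.2.1)
      = bubble d β * twoPoint d β (x + y) := by
    rw [show (∑' c : Cod d x y, wt β c.2.1.1 * wt β c.2.2.1.1 * wt β c.2.2.2.1)
        = ∑' (z : Fin d → ℤ), ∑' t : ({l : List (Fin d → ℤ) // SAWL (x+y) l} ×
          {l : List (Fin d → ℤ) // SAWL z l} × {l : List (Fin d → ℤ) // SAWL z l}),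
          wt β t.1.1 * wt β t.2.1.1 * wt β t.2.2.1 from
      ENNReal.tsum_sigma' _]
    rw [tsum_congr hinner, ENNReal.tsum_mul_left]
    unfold bubble
    rw [mul_comm]
    congr 1
    apply tsum_congr
    intro v
    rw [sq]
  rw [hl, ← hr]
  have hwt : ∀ pq : {l : List (Fin d → ℤ) // SAWL x l} × {l : List (Fin d → ℤ) // SAWL y l},
      wt β pq.1.1 * wt β pq.2.1 =
        wt β (Phi x y pq).2.1.1 * wt β (Phi x y pq).2.2.1.1 * wt β (Phi x y pq).2.2.2.1 :=
    fun pq => wt_mul_of_len (Phi_spec x y pq).1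
  rw [tsum_congr hwt]
  exact ENNReal.tsum_comp_le_tsum_of_injective (Phi_injective x y)
    (fun c => wt β c.2.1.1 * wt β c.2.2.1.1 * wt β c.2.2.2.1)

noncomputable def fdecay (d : ℕ) (β : ℝ) (v : Fin d → ℤ) : ℝ :=
  -Real.log ((twoPoint d β v).toReal)

lemma toReal_twoPoint_pos {β : ℝ} (hβ : betaCrit d < β) (v : Fin d → ℤ) :
    0 < (twoPoint d β v).toReal :=
  ENNReal.toReal_pos (twoPoint_pos β v).ne' (twoPoint_ne_top hβ v)

lemma fdecay_subadd {β : ℝ} (hβ : betaCrit d < β) (u v : Fin d → ℤ) :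
    fdecay d β (u + v) ≤ fdecay d β u + fdecay d β v + Real.log (bubble d β).toReal := by
  have hBne : bubble d β ≠ ⊤ := bubble_ne_top hβ
  have hgne := twoPoint_ne_top (d := d) hβ
  have hgpos := toReal_twoPoint_pos (d := d) hβ
  have h1 : (twoPoint d β u).toReal * (twoPoint d β v).toReal ≤
      (bubble d β).toReal * (twoPoint d β (u + v)).toReal := by
    rw [← ENNReal.toReal_mul, ← ENNReal.toReal_mul]
    exact ENNReal.toReal_mono (ENNReal.mul_ne_top hBne (hgne _)) (key_ineq β u v)
  have hBpos : 0 < (bubble d β).toReal := by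
    have h1' : (1:ℝ) ≤ (bubble d β).toReal := by
      have := ENNReal.toReal_mono hBne (one_le_bubble (d := d) β)
      simpa using this
    linarith
  have hlog := Real.log_le_log (mul_pos (hgpos u) (hgpos v)) h1
  rw [Real.log_mul (hgpos u).ne' (hgpos v).ne',
    Real.log_mul hBpos.ne' (hgpos (u + v)).ne'] at hlog
  unfold fdecay
  linarith

lemma fdecay_le {β : ℝ} (hβ : betaCrit d < β) (v : Fin d → ℤ) :
    fdecay d β v ≤ |β| * norm1 v := by
  have hge : Real.exp (-β * norm1 v) ≤ (twoPoint d β v).toReal := by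
    have := ENNReal.toReal_mono (twoPoint_ne_top hβ v) (le_twoPoint β v)
    rwa [ENNReal.toReal_ofReal (Real.exp_nonneg _)] at this
  have hlog := Real.log_le_log (Real.exp_pos _) hge
  rw [Real.log_exp] at hlog
  unfold fdecay
  have h1 : β * (norm1 v : ℝ) ≤ |β| * norm1 v :=
    mul_le_mul_of_nonneg_right (le_abs_self β) (Nat.cast_nonneg _)
  linarith

lemma fdecay_ge {β : ℝ} (hβ : betaCrit d < β) (v : Fin d → ℤ) :
    -Real.log (∑' x : Fin d → ℤ, twoPoint d β x).toReal ≤ fdecay d β v := by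
  have hle : (twoPoint d β v).toReal ≤ (∑' x : Fin d → ℤ, twoPoint d β x).toReal :=
    ENNReal.toReal_mono (susc_finite_of_gt hβ) (twoPoint_le_susc β v)
  have hlog := Real.log_le_log (toReal_twoPoint_pos hβ v) hle
  unfold fdecay
  linarith

lemma floor_add_bounds (s t : ℝ) :
    0 ≤ ⌊s + t⌋ - ⌊s⌋ - ⌊t⌋ ∧ ⌊s + t⌋ - ⌊s⌋ - ⌊t⌋ ≤ 1 := by
  have h1 : (⌊s⌋ + ⌊t⌋ : ℤ) ≤ ⌊s + t⌋ := by
    apply Int.le_floor.mpr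
    push_cast
    exact add_le_add (Int.floor_le s) (Int.floor_le t)
  have h2 : ⌊s + t⌋ < ⌊s⌋ + ⌊t⌋ + 2 := by
    apply Int.floor_lt.mpr
    push_cast
    have := Int.lt_floor_add_one s
    have := Int.lt_floor_add_one t
    linarith
  omega

end SAWAux


/-- For supercritical `β > β_c(d)` the decay rate
`τ_β(x) = -lim_{n→∞} (1/n) log g_β([nx])` exists for every `x ∈ ℝ^d`. -/
theorem decay_rate_exists (d : ℕ) (β : ℝ) (hβ : betaCrit d < β) (x : Fin d → ℝ) :
    ∃ τ : ℝ, Filter.Tendsto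
      (fun n : ℕ => -(1 / (n : ℝ)) *
        Real.log ((twoPoint d β fun i => ⌊(n : ℝ) * x i⌋).toReal))
      Filter.atTop (nhds τ) := by
  classical
  set vn : ℕ → (Fin d → ℤ) := fun n => fun i => ⌊(n:ℝ) * x i⌋ with hvn
  set LB : ℝ := Real.log (bubble d β).toReal with hLB
  have hBne : bubble d β ≠ ⊤ := SAWAux.bubble_ne_top hβ
  have hLB0 : 0 ≤ LB := by
    apply Real.log_nonneg
    have := ENNReal.toReal_mono hBne (SAWAux.one_le_bubble (d := d) β)
    simpa using this
  set K : ℝ := 2 * LB + |β| * d with hK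
  have hfloor : ∀ n m : ℕ, ∀ i : Fin d,
      0 ≤ vn (n+m) i - vn n i - vn m i ∧ vn (n+m) i - vn n i - vn m i ≤ 1 := by
    intro n m i
    have hcast : ((n + m : ℕ) : ℝ) * x i = (n:ℝ) * x i + (m:ℝ) * x i := by
      push_cast; ring
    simp only [hvn, hcast]
    exact SAWAux.floor_add_bounds ((n:ℝ) * x i) ((m:ℝ) * x i)
  have hsub : ∀ n m : ℕ,
      SAWAux.fdecay d β (vn (n+m)) ≤ SAWAux.fdecay d β (vn n) + SAWAux.fdecay d β (vn m) + K := by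
    intro n m
    set ε : Fin d → ℤ := vn (n+m) - vn n - vn m with hε
    have hnormε : (SAWAux.norm1 ε : ℝ) ≤ d := by
      have hn : SAWAux.norm1 ε ≤ d := by
        unfold SAWAux.norm1
        calc ∑ i, (ε i).natAbs ≤ ∑ _i : Fin d, 1 := by
              refine Finset.sum_le_sum fun i _ => ?_
              have := hfloor n m i
              have hεi : ε i = vn (n+m) i - vn n i - vn m i := rfl
              rw [hεi]
              omega
          _ = d := by simp
      exact_mod_cast hn
    have hrw : vn (n+m) = vn n + vn m + ε := by
      funext i
      simp only [hε, Pi.add_apply, Pi.sub_apply]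
      ring
    have h1 := SAWAux.fdecay_subadd hβ (vn n + vn m) ε
    have h2 := SAWAux.fdecay_subadd hβ (vn n) (vn m)
    have h3 := SAWAux.fdecay_le hβ ε
    have h4 : |β| * (SAWAux.norm1 ε : ℝ) ≤ |β| * d :=
      mul_le_mul_of_nonneg_left hnormε (abs_nonneg β)
    rw [hrw]
    calc SAWAux.fdecay d β (vn n + vn m + ε)
        ≤ SAWAux.fdecay d β (vn n + vn m) + SAWAux.fdecay d β ε + LB := h1
      _ ≤ SAWAux.fdecay d β (vn n) + SAWAux.fdecay d β (vn m) + K := by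
          rw [hK]; linarith
  set u : ℕ → ℝ := fun n => SAWAux.fdecay d β (vn n) + K with hu
  have hSub : Subadditive u := by
    intro n m
    have := hsub n m
    simp only [hu]
    linarith
  set c₀ : ℝ := -Real.log (∑' v : Fin d → ℤ, twoPoint d β v).toReal + K with hc₀
  have hlow : ∀ n : ℕ, c₀ ≤ u n := by
    intro n
    have := SAWAux.fdecay_ge hβ (vn n)
    simp only [hu, hc₀]
    linarith
  have hbdd : BddBelow (Set.range fun n : ℕ => u n / n) := by
    refine ⟨min c₀ 0, ?_⟩
    rintro r ⟨n, rfl⟩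
    rcases Nat.eq_zero_or_pos n with h0 | hpos
    · subst h0
      simp only [Nat.cast_zero, div_zero]
      exact min_le_right _ _
    · have hn0 : (0:ℝ) < n := by exact_mod_cast hpos
      have hn1 : (1:ℝ) ≤ n := by exact_mod_cast hpos
      rcases le_or_gt 0 c₀ with hc | hc
      · exact le_trans (min_le_right _ _) (div_nonneg (le_trans hc (hlow n)) hn0.le)
      · have h1 : c₀ / n ≤ u n / n := (div_le_div_iff_of_pos_right hn0).mpr (hlow n)
        have h2 : c₀ ≤ c₀ / n := by
          rw [le_div_iff₀ hn0]
          nlinarith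
        exact le_trans (min_le_left _ _) (le_trans h2 h1)
  have hlim := hSub.tendsto_lim hbdd
  refine ⟨hSub.lim, ?_⟩
  have heq : (fun n : ℕ => -(1 / (n : ℝ)) *
      Real.log ((twoPoint d β fun i => ⌊(n : ℝ) * x i⌋).toReal))
      = fun n : ℕ => u n / n - K * (1 / n) := by
    funext n
    have harg : (fun i => ⌊(n : ℝ) * x i⌋) = vn n := rfl
    rw [harg]
    rcases Nat.eq_zero_or_pos n with h0 | hpos
    · subst h0
      simp [hu]
    · have hn : (n:ℝ) ≠ 0 := by
        have : (0:ℝ) < n := by exact_mod_cast hpos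
        exact this.ne'
      simp only [hu, SAWAux.fdecay]
      field_simp
      ring
  rw [heq]
  have h2 : Filter.Tendsto (fun n : ℕ => K * (1 / (n:ℝ))) Filter.atTop (nhds 0) := by
    have := tendsto_const_div_atTop_nhds_zero_nat K
    simpa [mul_one_div, div_eq_mul_inv] using this
  have := hlim.sub h2
  simpa using this
end
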